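/- Fix constants c_1, c_2 > 0 and set R_{ℓ,δ}(η',η'') = p_{ℓ,δ}(η',η'') + R_0(c_1 ℓ_* δ, (c_2+4) δ^{1/2}), and let Ẽ^η_{00} = ⋃_ℓ ⋃_{η'+η''=η, η'∈J̃_1, η''∈J̃_2} R_{ℓ,δ}(η',η''), where ℓ ranges over ℕ_0^* with 0 ≤ ℓ ≤ (π/8) δ^{-1/2} − 1. Fix η' ∈ J̃_1 and η'' ∈ J̃_2 with η' + η'' = η. Then there exists a_0 > 0, independent of δ (and of η', η''), such that for every a with a_0 ≤ a ≤ (π/8) δ^{-1/2}: 𝓔̃_a(η',η'') ∩ Ẽ^η_{00} = ∅ and ℛ_{a δ^{1/2}}(Ẽ^η_{00}) ∩ 𝓔̃(η',η'') = ∅. -/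

import Mathlib

open Set Pointwise

noncomputable def GammaD (δ μ : ℝ) : Set ℂ :=
  {ξ : ℂ | ξ ≠ 0 ∧ μ * Real.sqrt δ ≤ ξ.arg ∧ ξ.arg < (μ + 1) * Real.sqrt δ}

def calND (δ : ℝ) : Set ℤ :=
  {μ : ℤ | |(μ : ℝ)| ≤ Real.pi / 8 * (Real.sqrt δ)⁻¹ - 1}

noncomputable def uSetD (δ μ : ℝ) (J : Set ℝ) : Set (ℂ × ℝ) :=
  {p : ℂ × ℝ | |p.2 - ‖p.1‖| ≤ δ ∧ p.1 ∈ GammaD δ μ ∧ ‖p.1‖ ∈ J}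

noncomputable def rot (σ : ℝ) : ℂ → ℂ := fun z => Complex.exp (σ * Complex.I) * z

noncomputable def pPt (δ ℓ η' η'' : ℝ) : ℂ :=
  ⟨(η' + η'') * Real.cos (ℓ * Real.sqrt δ), (η' - η'') * Real.sin (ℓ * Real.sqrt δ)⟩

def rect (p : ℂ) (a b : ℝ) : Set ℂ :=
  {z : ℂ | |z.re - p.re| ≤ a ∧ |z.im - p.im| ≤ b}

noncomputable def curveE (η' η'' : ℝ) : Set ℂ :=
  if η' = η'' then {ξ : ℂ | ξ.im = 0 ∧ 1 ≤ ξ.re ∧ ξ.re ≤ η' + η''}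
  else {ξ : ℂ | ξ.re ^ 2 / (η' + η'') ^ 2 + ξ.im ^ 2 / (η' - η'') ^ 2 = 1 ∧
        1 ≤ ξ.re ∧ ξ.re ≤ η' + η'' ∧ (η'' ≤ η' → 0 ≤ ξ.im) ∧ (η' ≤ η'' → ξ.im ≤ 0)}

noncomputable def tildeE (η' η'' : ℝ) : Set ℂ :=
  curveE η' η'' ∪ {ξ : ℂ | ξ.im = 0 ∧ η' + η'' ≤ ξ.re ∧ ξ.re ≤ 5}

noncomputable def E00 (δ c₁ c₂ η a₁ b₁ a₂ b₂ : ℝ) : Set ℂ :=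
  {z : ℂ | ∃ k : ℕ, ∃ η' η'' : ℝ,
    (k : ℝ) / 2 ≤ Real.pi / 8 * (Real.sqrt δ)⁻¹ - 1 ∧
    η' ∈ Set.Icc a₁ b₁ ∧ η'' ∈ Set.Icc a₂ b₂ ∧ η' + η'' = η ∧
    z ∈ rect (pPt δ ((k : ℝ) / 2) η' η'')
          (c₁ * max ((k : ℝ) / 2) (1 / 2) * δ) ((c₂ + 4) * Real.sqrt δ)}

/-!
Write `e = δ^{1/2}`, `θ = a e` and `t = ℓ e`. The rectangle `R_{ℓ,δ}(p, q)` is a box of size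
`O(ℓ_* δ) × O(e)` around `(η cos t, (p - q) sin t)`, and `p - q` is within `3e` of `d = η' - η''`.
The arc `𝓔(η', η'')` is `(η cos φ, d sin φ)` with `sin φ ≥ 0` (for `η' = η''` this is the case
`d = 0`), and the tail of `𝓔̃` lies on the real axis beyond `η`.

For a tail point `r ≥ η`, the height `r sin θ` of its rotation forces `t ≳ θ`, and then
`r cos θ - η cos t ≳ t²` exceeds the width `c₁ ℓ_* δ ≈ c₁ t e`. For an arc point, rotate back by
`θ`: the centre lands within `O((t + θ) e)` of `η cos φ` horizontally and within `O(e)` of `d sin φ`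
vertically. Comparing heights over the circle of radius `η`, the first bound becomes an `O(e)`
bound on `η sin φ` minus the height `u` over the rotated centre (because `u ≳ max(t, θ)`), and an
explicit identity then shows that `η` times the vertical offset is at least `0.93 θ - O(e)`, which
contradicts the `O(e)` bound once `a₀` is large.

Complex conjugation swaps `η'` and `η''` and reverses rotations, which turns the first claim into
the second.
-/

open Real ComplexConjugate

lemma mul_le_sin_of_le {x : ℝ} (h0 : 0 ≤ x) (h1 : x ≤ 0.394) : 0.96 * x ≤ sin x := by
  nlinarith [sin_ge_sub_cube h0, mul_le_mul_of_nonneg_right h1 (sq_nonneg x)]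

lemma cos_le_one_sub_mul_sq {x : ℝ} (h0 : 0 ≤ x) (h1 : x ≤ 0.394) :
    cos x ≤ 1 - 0.46 * x ^ 2 := by
  have hsin : 0.48 * x ≤ sin (x / 2) := by
    have := mul_le_sin_of_le (x := x / 2) (by linarith) (by linarith)
    linarith
  have hcos : cos x = 1 - 2 * sin (x / 2) ^ 2 := by
    have := cos_two_mul' (x / 2)
    rw [mul_div_cancel₀ x two_ne_zero] at this
    linarith [sin_sq_add_cos_sq (x / 2)]
  nlinarith [mul_self_le_mul_self (by linarith) hsin]

lemma abs_sub_mul_add_eq_of_sq_add_sq_eq {a b x y : ℝ} (hx : 0 ≤ x) (hy : 0 ≤ y)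
    (h : a ^ 2 + x ^ 2 = b ^ 2 + y ^ 2) : |x - y| * (x + y) = |a - b| * |a + b| := by
  rw [← abs_of_nonneg (add_nonneg hx hy), ← abs_mul, ← abs_mul, ← abs_neg]
  congr 1
  linear_combination -h

lemma abs_sub_le_of_mul_add_le {x u K B : ℝ} (hx : 0 ≤ x) (hu : 0 < u)
    (h : |x - u| * (x + u) ≤ K) (hK : K ≤ B * u) : |x - u| ≤ B :=
  le_of_mul_le_mul_right ((mul_le_mul_of_nonneg_left (by linarith) (abs_nonneg _)).trans
    (h.trans hK)) hu

/-- `e = δ^{1/2}`, `θ = a δ^{1/2}` is the rotation angle, `t = ℓ δ^{1/2}` the angle of a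
rectangle centre and `η = η' + η''`. -/
structure Regime (c₁ c₂ e θ t η : ℝ) : Prop where
  c₁_pos : 0 < c₁
  c₂_pos : 0 < c₂
  e_pos : 0 < e
  θ_ge : 100 * (c₁ + c₂ + 10) * e ≤ θ
  θ_le : θ ≤ 0.394
  t_nonneg : 0 ≤ t
  t_le : t ≤ 0.394
  η_ge : 1.99 ≤ η
  η_le : η ≤ 4.01

namespace Regime

variable {c₁ c₂ e θ t η : ℝ}

lemma θ_pos (h : Regime c₁ c₂ e θ t η) : 0 < θ :=
  lt_of_lt_of_le (mul_pos (by linarith [h.c₁_pos, h.c₂_pos]) h.e_pos) h.θ_ge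

lemma e_le (h : Regime c₁ c₂ e θ t η) : 1000 * e ≤ θ := by
  nlinarith [h.θ_ge, h.e_pos, mul_pos (add_pos h.c₁_pos h.c₂_pos) h.e_pos]

lemma false_of_outer_segment (h : Regime c₁ c₂ e θ t η) {r d' : ℝ} (hd' : |d'| ≤ 1.01)
    (hr : η ≤ r) (hX : |cos θ * r - η * cos t| ≤ c₁ * (t + e) * e)
    (hY : |sin θ * r - d' * sin t| ≤ (c₂ + 4) * e) : False := by
  have hθ0 := h.θ_pos
  have he1000 := h.e_le
  have ⟨hc₁, hc₂, he, hθ, hθ', ht, ht', hη, _⟩ := h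
  have hS := mul_le_sin_of_le hθ0.le hθ'
  have hs := sin_le ht
  have hC := one_sub_sq_div_two_le_cos (x := θ)
  have hc := cos_le_one_sub_mul_sq ht ht'
  have hds : d' * sin t ≤ 1.01 * sin t :=
    mul_le_mul_of_nonneg_right ((le_abs_self d').trans hd') (by nlinarith [mul_le_sin_of_le ht ht'])
  have hce : (c₂ + 4) * e ≤ θ / 100 := by nlinarith [mul_pos hc₁ he]
  have hrS : 1.99 * (0.96 * θ) ≤ r * sin θ :=
    mul_le_mul (by linarith) hS (by positivity) (by linarith)
  have htθ : 1.88 * θ ≤ t := by linarith [(abs_le.mp hY).2]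
  have hgap : 0.318 * t ^ 2 ≤ cos θ - cos t := by nlinarith
  have hcos : η * (cos θ - cos t) ≤ c₁ * (t + e) * e := by
    nlinarith [(abs_le.mp hX).2, mul_le_mul_of_nonneg_right hr (show 0 ≤ cos θ by nlinarith)]
  have hc₁e : c₁ * e ≤ 0.006 * t := by nlinarith [mul_pos hc₂ he]
  have het : e ≤ t := by linarith
  nlinarith [mul_le_mul_of_nonneg_left hgap (show 0 ≤ η by linarith),
    mul_le_mul_of_nonneg_right hc₁e (show 0 ≤ t + e by linarith)]

lemma le_height (h : Regime c₁ c₂ e θ t η) {d s₂ u : ℝ} (hd : |d| ≤ 1.01)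
    (hs₂ : s₂ = η * sin t * cos θ - d * cos t * sin θ) (hu0 : 0 ≤ u)
    (hu : u ^ 2 = s₂ ^ 2 + (η ^ 2 - d ^ 2) * sin θ ^ 2) :
    1.711 * sin θ ≤ u ∧ |s₂| ≤ u ∧ 0.82 * t ≤ u := by
  have hθ0 := h.θ_pos
  have ⟨_, _, _, _, hθ', ht, ht', hη, _⟩ := h
  have hS := mul_le_sin_of_le hθ0.le hθ'
  have hηd : 2.93 ≤ η ^ 2 - d ^ 2 := by nlinarith [abs_le.mp hd]
  have huS : 1.711 * sin θ ≤ u :=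
    (le_abs_self _).trans (abs_le_of_sq_le_sq (by nlinarith [sq_nonneg s₂]) hu0)
  have hus₂ : |s₂| ≤ u := abs_le_of_sq_le_sq (by nlinarith [sq_nonneg (sin θ)]) hu0
  refine ⟨huS, hus₂, ?_⟩
  rcases le_or_gt t (2 * θ) with htθ | htθ
  · linarith
  · have hs := mul_le_sin_of_le ht ht'
    have hC : 0.922 ≤ cos θ := by nlinarith [one_sub_sq_div_two_le_cos (x := θ)]
    have hdcS : d * cos t * sin θ ≤ 1.01 * θ := by
      refine (le_abs_self _).trans ?_
      rw [abs_mul, abs_mul]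
      exact mul_le_mul (mul_le_of_le_one_right (abs_nonneg _) (abs_cos_le_one t) |>.trans hd)
        (abs_sin_le_abs.trans (abs_of_pos hθ0).le) (abs_nonneg _) (by norm_num)
    have hηsC : 1.99 * (0.96 * t) * 0.922 ≤ η * sin t * cos θ :=
      mul_le_mul (mul_le_mul hη hs (by positivity) (by linarith)) hC (by norm_num) (by nlinarith)
    linarith [le_abs_self s₂]

lemma le_gap (h : Regime c₁ c₂ e θ t η) {d s₂ u : ℝ} (hd : |d| ≤ 1.01)
    (hs₂ : s₂ = η * sin t * cos θ - d * cos t * sin θ) (hu0 : 0 ≤ u)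
    (hu : u ^ 2 = s₂ ^ 2 + (η ^ 2 - d ^ 2) * sin θ ^ 2) :
    0.93 * θ ≤ d * (u - s₂) + (η ^ 2 - d ^ 2) * (cos t * sin θ) := by
  obtain ⟨huS, hus₂, -⟩ := h.le_height hd hs₂ hu0 hu
  have hθ0 := h.θ_pos
  have ⟨_, _, _, _, hθ', ht, ht', hη, _⟩ := h
  have hS := mul_le_sin_of_le hθ0.le hθ'
  have hc : 0.922 ≤ cos t := by nlinarith [one_sub_sq_div_two_le_cos (x := t)]
  have hηd : 2.93 ≤ η ^ 2 - d ^ 2 := by nlinarith [abs_le.mp hd]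
  set Q := (η ^ 2 - d ^ 2) * sin θ with hQ
  have hQθ : 2.93 * (0.96 * θ) ≤ Q := mul_le_mul hηd hS (by positivity) (by linarith)
  have hcQ : 0.922 * Q ≤ (η ^ 2 - d ^ 2) * (cos t * sin θ) := by
    rw [hQ]; linear_combination mul_le_mul_of_nonneg_left hc (show 0 ≤ Q by linarith)
  have hus : 0 ≤ u - s₂ := by linarith [le_abs_self s₂]
  rcases le_or_gt 0 d with hd0 | hd0
  · nlinarith [mul_nonneg hd0 hus]
  · -- `u - s₂ = Q sin θ / (u + s₂)` is small once `s₂ ≥ 0`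
    have hs₂0 : 0 ≤ s₂ := by
      rw [hs₂]
      nlinarith [mul_nonneg (mul_nonneg (by linarith : (0:ℝ) ≤ η)
          (sin_nonneg_of_nonneg_of_le_pi ht (by linarith [pi_gt_three])))
          (show 0 ≤ cos θ by nlinarith [one_sub_sq_div_two_le_cos (x := θ)]),
        mul_nonneg (mul_nonneg (neg_nonneg.mpr hd0.le) (by linarith : 0 ≤ cos t))
          (show 0 ≤ sin θ by linarith)]
    have hprod : (u - s₂) * (u + s₂) = Q * sin θ := by rw [hQ]; linear_combination hu
    have hus' : (u - s₂) * (1.711 * sin θ) ≤ Q * sin θ :=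
      hprod ▸ mul_le_mul_of_nonneg_left (by linarith) hus
    have hus'' : u - s₂ ≤ 0.585 * Q := by
      nlinarith [mul_le_mul_of_nonneg_right (show 0 ≤ Q by linarith) (show 0 ≤ sin θ by linarith)]
    nlinarith [mul_le_mul_of_nonneg_right (abs_le.mp hd).1 hus]

lemma false_of_near_back_rotated (h : Regime c₁ c₂ e θ t η) {d cφ sφ : ℝ} (hd : |d| ≤ 1.01)
    (hφ : cφ ^ 2 + sφ ^ 2 = 1) (hsφ : 0 ≤ sφ)
    (hA : |η * cφ - (η * cos t * cos θ + d * sin t * sin θ)| ≤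
      (c₁ * (t + e) + (c₂ + 5.2) * θ) * e)
    (hB : |d * sφ - (d * sin t * cos θ - η * cos t * sin θ)| ≤ (0.16 * c₁ + c₂ + 5.19) * e) :
    False := by
  obtain ⟨s₂, hs₂⟩ : ∃ s₂, s₂ = η * sin t * cos θ - d * cos t * sin θ := ⟨_, rfl⟩
  have hηd : 0 ≤ η ^ 2 - d ^ 2 := by nlinarith [abs_le.mp hd, h.η_ge]
  obtain ⟨u, hu0, hu⟩ : ∃ u, 0 ≤ u ∧ u ^ 2 = s₂ ^ 2 + (η ^ 2 - d ^ 2) * sin θ ^ 2 :=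
    ⟨_, sqrt_nonneg _, sq_sqrt (by positivity)⟩
  obtain ⟨huS, -, hut⟩ := h.le_height hd hs₂ hu0 hu
  have hgap := h.le_gap hd hs₂ hu0 hu
  have hθ0 := h.θ_pos
  have he1000 := h.e_le
  have ⟨hc₁, hc₂, he, hθ, hθ', _, _, hη, hη'⟩ := h
  have hS := mul_le_sin_of_le hθ0.le hθ'
  set v₁ := η * cos t * cos θ + d * sin t * sin θ
  -- `η sφ` and `u` are the heights over `η cφ` and `v₁` of the circle of radius `η`
  have hcirc : v₁ ^ 2 + u ^ 2 = η ^ 2 := by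
    rw [hu, hs₂]
    linear_combination (η ^ 2 * cos θ ^ 2 + d ^ 2 * sin θ ^ 2) * sin_sq_add_cos_sq t +
      η ^ 2 * sin_sq_add_cos_sq θ
  have hηsφ : 0 ≤ η * sφ := mul_nonneg (by linarith) hsφ
  have hheight := abs_sub_mul_add_eq_of_sq_add_sq_eq (a := η * cφ) (b := v₁) hηsφ hu0
    (by linear_combination η ^ 2 * hφ - hcirc)
  have hsum : |η * cφ + v₁| ≤ 8.02 := by
    have hcφ : |η * cφ| ≤ η := abs_le_of_sq_le_sq (by nlinarith [sq_nonneg sφ]) (by linarith)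
    have hv₁ : |v₁| ≤ η := abs_le_of_sq_le_sq (by nlinarith [sq_nonneg u]) (by linarith)
    linarith [abs_add_le (η * cφ) v₁]
  -- the width `c₁ ℓ_* δ` of the rectangles is what keeps `hA` of size `max(t, θ) e ≲ u e`
  have hdiff : |η * sφ - u| ≤ (10 * c₁ + 5 * c₂ + 26) * e := by
    refine abs_sub_le_of_mul_add_le hηsφ (by linarith) (hheight.le.trans
      (mul_le_mul hA hsum (abs_nonneg _) ((abs_nonneg _).trans hA))) ?_
    nlinarith [mul_le_mul_of_nonneg_left hut (mul_pos hc₁ he).le,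
      mul_le_mul_of_nonneg_left (show 1640 * e ≤ u by linarith) (mul_pos hc₁ he).le,
      mul_le_mul_of_nonneg_left (show 1.64 * θ ≤ u by linarith)
        (mul_pos (by linarith : 0 < c₂ + 5.2) he).le,
      mul_nonneg (mul_pos hc₁ he).le hu0, mul_nonneg (mul_pos hc₂ he).le hu0, mul_nonneg he.le hu0]
  have hsplit : η * (d * sφ - (d * sin t * cos θ - η * cos t * sin θ)) =
      (d * (u - s₂) + (η ^ 2 - d ^ 2) * (cos t * sin θ)) + d * (η * sφ - u) := by
    rw [hs₂]; ring
  have hηB : η * (d * sφ - (d * sin t * cos θ - η * cos t * sin θ)) ≤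
      4.01 * ((0.16 * c₁ + c₂ + 5.19) * e) :=
    (le_abs_self _).trans (by rw [abs_mul, abs_of_pos (by linarith)]; gcongr)
  have hdB : |d * (η * sφ - u)| ≤ 1.01 * ((10 * c₁ + 5 * c₂ + 26) * e) := by
    rw [abs_mul]; gcongr
  linarith [neg_abs_le (d * (η * sφ - u)), mul_pos hc₁ he, mul_pos hc₂ he]

lemma false_of_ellipse (h : Regime c₁ c₂ e θ t η) {d d' cφ sφ : ℝ} (hd : |d| ≤ 1.01)
    (hdd : |d' - d| ≤ 3 * e) (hφ : cφ ^ 2 + sφ ^ 2 = 1) (hsφ : 0 ≤ sφ)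
    (hX : |cos θ * (η * cφ) - sin θ * (d * sφ) - η * cos t| ≤ c₁ * (t + e) * e)
    (hY : |sin θ * (η * cφ) + cos θ * (d * sφ) - d' * sin t| ≤ (c₂ + 4) * e) : False := by
  have hθ0 := h.θ_pos
  have he1000 := h.e_le
  have ⟨hc₁, _, he, _, hθ', ht, ht', _, _⟩ := h
  have hC : |cos θ| ≤ 1 := abs_cos_le_one θ
  have hS : |sin θ| ≤ θ := abs_sin_le_abs.trans (abs_of_pos hθ0).le
  have hs : |sin t| ≤ 0.394 := abs_sin_le_abs.trans ((abs_of_nonneg ht).trans_le ht')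
  -- rotating back by `θ` turns `hX`, `hY` into residuals against `R_{-θ}(η cos t, d sin t)`
  have hA : |η * cφ - (η * cos t * cos θ + d * sin t * sin θ)| ≤
      (c₁ * (t + e) + (c₂ + 5.2) * θ) * e := by
    have hrot : η * cφ - (η * cos t * cos θ + d * sin t * sin θ) =
        cos θ * (cos θ * (η * cφ) - sin θ * (d * sφ) - η * cos t) +
        sin θ * (sin θ * (η * cφ) + cos θ * (d * sφ) - d' * sin t) + sin θ * sin t * (d' - d) := by
      linear_combination (-(η * cφ)) * sin_sq_add_cos_sq θ
    rw [hrot]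
    refine (abs_add_three _ _ _).trans ?_
    rw [abs_mul, abs_mul, abs_mul, abs_mul]
    calc _ ≤ 1 * (c₁ * (t + e) * e) + θ * ((c₂ + 4) * e) + θ * 0.394 * (3 * e) := by gcongr
      _ ≤ _ := by nlinarith [mul_pos hθ0 he]
  have hB : |d * sφ - (d * sin t * cos θ - η * cos t * sin θ)| ≤
      (0.16 * c₁ + c₂ + 5.19) * e := by
    have hrot : d * sφ - (d * sin t * cos θ - η * cos t * sin θ) =
        cos θ * (sin θ * (η * cφ) + cos θ * (d * sφ) - d' * sin t) +
        -(sin θ * (cos θ * (η * cφ) - sin θ * (d * sφ) - η * cos t)) +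
        cos θ * sin t * (d' - d) := by
      linear_combination (-(d * sφ)) * sin_sq_add_cos_sq θ
    rw [hrot]
    refine (abs_add_three _ _ _).trans ?_
    rw [abs_neg, abs_mul, abs_mul, abs_mul, abs_mul]
    have hte : c₁ * e * (t + e) ≤ c₁ * e * 0.3944 :=
      mul_le_mul_of_nonneg_left (by linarith) (mul_pos hc₁ he).le
    calc _ ≤ 1 * ((c₂ + 4) * e) + 0.394 * (c₁ * (t + e) * e) + 1 * 0.394 * (3 * e) := by
          gcongr; linarith
      _ ≤ _ := by nlinarith [mul_pos hc₁ he]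
  exact h.false_of_near_back_rotated hd hφ hsφ hA hB

end Regime

lemma rot_re (σ : ℝ) (w : ℂ) : (rot σ w).re = cos σ * w.re - sin σ * w.im := by
  simp [rot, Complex.mul_re, Complex.exp_ofReal_mul_I_re, Complex.exp_ofReal_mul_I_im]

lemma rot_im (σ : ℝ) (w : ℂ) : (rot σ w).im = sin σ * w.re + cos σ * w.im := by
  simp [rot, Complex.mul_im, Complex.exp_ofReal_mul_I_re, Complex.exp_ofReal_mul_I_im]
  ring

lemma rot_conj_rot (σ : ℝ) (w : ℂ) : rot σ (conj (rot σ w)) = conj w := by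
  apply Complex.ext
  · simp only [rot_re, rot_im, Complex.conj_re, Complex.conj_im]
    linear_combination w.re * sin_sq_add_cos_sq σ
  · simp only [rot_re, rot_im, Complex.conj_re, Complex.conj_im]
    linear_combination -w.im * sin_sq_add_cos_sq σ

lemma conj_mem_tildeE {η' η'' : ℝ} {w : ℂ} (hw : w ∈ tildeE η' η'') :
    conj w ∈ tildeE η'' η' := by
  rw [tildeE, add_comm η'']
  rcases hw with hw | ⟨him, hre⟩
  · left
    by_cases h : η' = η''
    · simp only [curveE, h, if_true] at hw ⊢
      simpa [hw.1] using hw.2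
    · simp only [curveE, h, Ne.symm h, if_false] at hw ⊢
      obtain ⟨hell, hre, hre', him, him'⟩ := hw
      refine ⟨?_, by simpa using hre, by simpa [add_comm] using hre',
        fun h' => by simpa using him' h', fun h' => by simpa using him h'⟩
      rw [Complex.conj_re, Complex.conj_im, neg_sq, ← neg_sub, neg_sq, add_comm η'']
      exact hell
  · right
    simpa [him] using hre

lemma conj_mem_E00 {δ c₁ c₂ η a₁ b₁ a₂ b₂ : ℝ} {z : ℂ} (hz : z ∈ E00 δ c₁ c₂ η a₁ b₁ a₂ b₂) :
    conj z ∈ E00 δ c₁ c₂ η a₂ b₂ a₁ b₁ := by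
  obtain ⟨k, p, q, hk, hp, hq, hpq, hre, him⟩ := hz
  refine ⟨k, q, p, hk, hq, hp, by linarith, by simpa [pPt, add_comm q] using hre, ?_⟩
  rw [← abs_neg]
  convert him using 2
  simp [pPt]
  ring

lemma exists_cos_sin_of_mem_curveE {η' η'' : ℝ} {w : ℂ} (hw : w ∈ curveE η' η'') :
    ∃ cφ sφ : ℝ, cφ ^ 2 + sφ ^ 2 = 1 ∧ 0 ≤ sφ ∧
      w.re = (η' + η'') * cφ ∧ w.im = (η' - η'') * sφ := by
  unfold curveE at hw
  split_ifs at hw with h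
  · obtain ⟨him, hre, hre'⟩ := hw
    have hη : 0 < η' + η'' := by linarith
    have hc : (w.re / (η' + η'')) ^ 2 ≤ 1 := by
      rw [div_pow, div_le_one (by positivity)]
      nlinarith
    refine ⟨w.re / (η' + η''), √(1 - (w.re / (η' + η'')) ^ 2), ?_, sqrt_nonneg _, ?_, ?_⟩
    · rw [sq_sqrt (by linarith)]
      ring
    · field_simp
    · simp [him, h]
  · obtain ⟨hell, hre, hre', him, him'⟩ := hw
    have hη : 0 < η' + η'' := by linarith
    have hd : η' - η'' ≠ 0 := sub_ne_zero.2 h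
    refine ⟨w.re / (η' + η''), w.im / (η' - η''), by rw [div_pow, div_pow]; exact hell, ?_,
      by field_simp, by field_simp⟩
    rcases lt_or_gt_of_ne hd with hlt | hgt
    · exact div_nonneg_of_nonpos (him' (by linarith)) hlt.le
    · exact div_nonneg (him (by linarith)) hgt.le

lemma Regime.false_of_rot_mem_tildeE_near {c₁ c₂ e θ t η' η'' d' : ℝ}
    (h : Regime c₁ c₂ e θ t (η' + η'')) {w : ℂ} (hw : w ∈ tildeE η' η'')
    (hd : |η' - η''| ≤ 1.01) (hd' : |d'| ≤ 1.01) (hdd : |d' - (η' - η'')| ≤ 3 * e)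
    (hX : |(rot θ w).re - (η' + η'') * cos t| ≤ c₁ * (t + e) * e)
    (hY : |(rot θ w).im - d' * sin t| ≤ (c₂ + 4) * e) : False := by
  rw [rot_re] at hX
  rw [rot_im] at hY
  rcases hw with hw | ⟨him, hre, -⟩
  · obtain ⟨cφ, sφ, hφ, hsφ, hre, him⟩ := exists_cos_sin_of_mem_curveE hw
    rw [hre, him] at hX hY
    exact h.false_of_ellipse hd hdd hφ hsφ hX hY
  · rw [him, mul_zero, sub_zero] at hX
    rw [him, mul_zero, add_zero] at hY
    exact h.false_of_outer_segment hd' hre hX hY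

lemma regime_of_le {c₁ c₂ δ a ℓ η : ℝ} (hc₁ : 0 < c₁) (hc₂ : 0 < c₂) (hδ : 0 < δ)
    (ha : 100 * (c₁ + c₂ + 10) ≤ a) (ha' : a ≤ π / 8 * (√δ)⁻¹) (hℓ : 0 ≤ ℓ)
    (hℓ' : ℓ ≤ π / 8 * (√δ)⁻¹ - 1) (hη : 1.99 ≤ η) (hη' : η ≤ 4.01) :
    Regime c₁ c₂ (√δ) (a * √δ) (ℓ * √δ) η := by
  have he := sqrt_pos.2 hδ
  have hπ : π / 8 * (√δ)⁻¹ * √δ = π / 8 := by field_simp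
  have hπ' := pi_lt_d2
  refine ⟨hc₁, hc₂, he, by gcongr, ?_, by positivity, ?_, hη, hη'⟩
  · nlinarith [mul_le_mul_of_nonneg_right ha' he.le]
  · nlinarith [mul_le_mul_of_nonneg_right hℓ' he.le]

lemma rot_not_mem_E00 {c₁ c₂ δ α₁ β₁ α₂ β₂ η' η'' a : ℝ} (hc₁ : 0 < c₁) (hc₂ : 0 < c₂)
    (hδ : 0 < δ) (hδ' : δ < 1 / 1000000) (hα₁ : 1 ≤ α₁) (hβ₁ : β₁ ≤ 2) (hJ₁ : β₁ - α₁ ≤ √δ)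
    (hα₂ : 1 ≤ α₂) (hβ₂ : β₂ ≤ 2)
    (hη' : η' ∈ Icc (α₁ - δ) (β₁ + δ)) (hη'' : η'' ∈ Icc (α₂ - δ) (β₂ + δ))
    (ha : 100 * (c₁ + c₂ + 10) ≤ a) (ha' : a ≤ π / 8 * (√δ)⁻¹) {w : ℂ}
    (hw : w ∈ tildeE η' η'') :
    rot (a * √δ) w ∉ E00 δ c₁ c₂ (η' + η'') (α₁ - δ) (β₁ + δ) (α₂ - δ) (β₂ + δ) := by
  rintro ⟨k, p, q, hk, ⟨hp₁, hp₂⟩, ⟨hq₁, hq₂⟩, hpq, hX, hY⟩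
  obtain ⟨hη'₁, hη'₂⟩ := hη'
  obtain ⟨hη''₁, hη''₂⟩ := hη''
  have he := sqrt_pos.2 hδ
  have he2 := sq_sqrt hδ.le
  have hδe : δ ≤ 0.001 * √δ := by nlinarith
  have hR := regime_of_le (η := η' + η'') hc₁ hc₂ hδ ha ha' (by positivity) hk (by linarith)
    (by linarith)
  have hwidth : c₁ * max ((k : ℝ) / 2) (1 / 2) * δ ≤ c₁ * ((k : ℝ) / 2 * √δ + √δ) * √δ := by
    have : max ((k : ℝ) / 2) (1 / 2) ≤ (k : ℝ) / 2 + 1 :=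
      max_le (by linarith) (by linarith [k.cast_nonneg (α := ℝ)])
    calc c₁ * max ((k : ℝ) / 2) (1 / 2) * δ ≤ c₁ * ((k : ℝ) / 2 + 1) * δ := by gcongr
      _ = _ := by linear_combination (-(c₁ * ((k : ℝ) / 2 + 1))) * he2
  simp only [pPt, hpq] at hX hY
  refine hR.false_of_rot_mem_tildeE_near hw ?_ ?_ ?_ (hX.trans hwidth) hY <;> rw [abs_le] <;>
    constructor <;> linarith

theorem statement14 :
    ∀ c₁ c₂ : ℝ, 0 < c₁ → 0 < c₂ →
    ∃ a₀ : ℝ, 0 < a₀ ∧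
      ∀ δ : ℝ, 0 < δ → δ < 1 / 1000000 →
      ∀ α₁ β₁ α₂ β₂ : ℝ,
        1 ≤ α₁ → α₁ ≤ β₁ → β₁ ≤ 2 → β₁ - α₁ ≤ Real.sqrt δ →
        1 ≤ α₂ → α₂ ≤ β₂ → β₂ ≤ 2 → β₂ - α₂ ≤ Real.sqrt δ →
      ∀ η' ∈ Icc (α₁ - δ) (β₁ + δ),
      ∀ η'' ∈ Icc (α₂ - δ) (β₂ + δ),
      ∀ a : ℝ, a₀ ≤ a → a ≤ Real.pi / 8 * (Real.sqrt δ)⁻¹ →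
        (rot (a * Real.sqrt δ) '' tildeE η' η'') ∩
            E00 δ c₁ c₂ (η' + η'') (α₁ - δ) (β₁ + δ) (α₂ - δ) (β₂ + δ) = ∅ ∧
        (rot (a * Real.sqrt δ) ''
            E00 δ c₁ c₂ (η' + η'') (α₁ - δ) (β₁ + δ) (α₂ - δ) (β₂ + δ)) ∩
          tildeE η' η'' = ∅ := by
  intro c₁ c₂ hc₁ hc₂
  refine ⟨100 * (c₁ + c₂ + 10), by positivity, ?_⟩
  intro δ hδ hδ' α₁ β₁ α₂ β₂ hα₁ _ hβ₁ hJ₁ hα₂ _ hβ₂ hJ₂ η' hη' η'' hη'' a ha ha'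
  refine ⟨eq_empty_iff_forall_notMem.2 ?_, eq_empty_iff_forall_notMem.2 ?_⟩
  · rintro _ ⟨⟨w, hw, rfl⟩, hz⟩
    exact rot_not_mem_E00 hc₁ hc₂ hδ hδ' hα₁ hβ₁ hJ₁ hα₂ hβ₂ hη' hη'' ha ha' hw hz
  · rintro _ ⟨⟨z, hz, rfl⟩, hw⟩
    refine rot_not_mem_E00 hc₁ hc₂ hδ hδ' hα₂ hβ₂ hJ₂ hα₁ hβ₁ hη'' hη' ha ha'
      (conj_mem_tildeE hw) ?_
    rw [rot_conj_rot, add_comm]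
    exact conj_mem_E00 hz
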